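/- Under the conformal-block-expansion setup below, for every ε > 0 and every z₀ ∈ (0,1) there exists a finite constant C' such that for all z, z̄ with 0 < z ≤ z₀ ≤ z̄ < 1 one has (z z̄ / ((1−z)(1−z̄)))^{Δφ} · ∑_{i ∈ I : τ_i ≥ 2Δφ + ε} p_i · g_i(1−z, 1−z̄) ≤ C' · (1−z̄)^{ε/2}. -/

import Mathlib

/-!
For twist `τ ≥ 2Δφ + ε`, the crossing prefactor times `gᵢ(1 - z, 1 - z̄)` carries the factor
`(1 - z̄)^(τ/2 - Δφ) ≤ ((1 - z̄)/(1 - z₀))^(ε/2) (1 - z₀)^(τ/2 - Δφ)`, and the power series part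
only grows when `1 - z̄` is raised to `1 - z₀`. So the high-twist sum is at most
`((1 - z̄)/(1 - z₀))^(ε/2)` times the full crossed sum at `(1 - z, 1 - z₀)`. By the crossing
equation at `(z, z₀)` the latter is at most `z₀^(-Δφ) (1 + ∑ pᵢ gᵢ(z, z₀))`, and positivity of
the coefficients bounds this by its value at `z = z₀`.
-/

open Set

/-- A single conformal block contribution:
`g_i(z, z̄) = (z z̄)^(τᵢ/2) ∑_{n,m} a^{(i)}_{n,m} z^n z̄^m`. -/
noncomputable def blockFun (τi : ℝ) (coef : ℕ × ℕ → ℝ) (z zb : ℝ) : ℝ :=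
  (z * zb) ^ (τi / 2) * ∑' nm : ℕ × ℕ, coef nm * z ^ nm.1 * zb ^ nm.2

noncomputable def blockSeries (coef : ℕ × ℕ → ℝ) (z zb : ℝ) : ℝ :=
  ∑' nm : ℕ × ℕ, coef nm * z ^ nm.1 * zb ^ nm.2

lemma blockFun_eq (τi : ℝ) (coef : ℕ × ℕ → ℝ) (z zb : ℝ) :
    blockFun τi coef z zb = (z * zb) ^ (τi / 2) * blockSeries coef z zb :=
  rfl

section BlockSeries

variable {coef : ℕ × ℕ → ℝ} {z z' zb zb' : ℝ}

lemma blockSeries_nonneg (hc : ∀ nm, 0 ≤ coef nm) (hz : 0 ≤ z) (hzb : 0 ≤ zb) :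
    0 ≤ blockSeries coef z zb :=
  tsum_nonneg fun nm => by have := hc nm; positivity

lemma blockSeries_mono (hc : ∀ nm, 0 ≤ coef nm) (hz : 0 ≤ z) (hzz' : z ≤ z') (hzb : 0 ≤ zb)
    (hzbzb' : zb ≤ zb')
    (hs : Summable fun nm : ℕ × ℕ => coef nm * z' ^ nm.1 * zb' ^ nm.2) :
    blockSeries coef z zb ≤ blockSeries coef z' zb' := by
  have hterm (nm : ℕ × ℕ) :
      coef nm * z ^ nm.1 * zb ^ nm.2 ≤ coef nm * z' ^ nm.1 * zb' ^ nm.2 := by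
    have := hc nm
    have := hz.trans hzz'
    gcongr
  have hnonneg (nm : ℕ × ℕ) : 0 ≤ coef nm * z ^ nm.1 * zb ^ nm.2 := by
    have := hc nm; positivity
  exact Summable.tsum_le_tsum hterm (hs.of_nonneg_of_le hnonneg hterm) hs

lemma blockFun_nonneg (τi : ℝ) (hc : ∀ nm, 0 ≤ coef nm) (hz : 0 ≤ z) (hzb : 0 ≤ zb) :
    0 ≤ blockFun τi coef z zb :=
  mul_nonneg (by positivity) (blockSeries_nonneg hc hz hzb)

lemma blockFun_mono {τi : ℝ} (hτ : 0 ≤ τi) (hc : ∀ nm, 0 ≤ coef nm) (hz : 0 ≤ z)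
    (hzz' : z ≤ z') (hzb : 0 ≤ zb) (hzbzb' : zb ≤ zb')
    (hs : Summable fun nm : ℕ × ℕ => coef nm * z' ^ nm.1 * zb' ^ nm.2) :
    blockFun τi coef z zb ≤ blockFun τi coef z' zb' := by
  have hz' := hz.trans hzz'
  have hzb' := hzb.trans hzbzb'
  rw [blockFun_eq, blockFun_eq]
  have hprefactor : (z * zb) ^ (τi / 2) ≤ (z' * zb') ^ (τi / 2) := by gcongr
  exact mul_le_mul hprefactor (blockSeries_mono hc hz hzz' hzb hzbzb' hs)
    (blockSeries_nonneg hc hz hzb) (by positivity)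

end BlockSeries

lemma rpow_le_div_rpow_mul_rpow {v v₀ a b : ℝ} (hv : 0 < v) (hvv₀ : v ≤ v₀) (hba : b ≤ a) :
    v ^ a ≤ (v / v₀) ^ b * v₀ ^ a := by
  have hv₀ : 0 < v₀ := hv.trans_le hvv₀
  calc v ^ a = v ^ b * v ^ (a - b) := by rw [← Real.rpow_add hv, add_sub_cancel]
    _ ≤ v ^ b * v₀ ^ (a - b) := by gcongr
    _ = (v / v₀) ^ b * v₀ ^ a := by
      rw [Real.div_rpow hv.le hv₀.le, Real.rpow_sub hv₀]
      field_simp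

lemma div_rpow_mul_rpow {x w Δ s : ℝ} (hx : 0 ≤ x) (hw : 0 < w) :
    (x / w) ^ Δ * w ^ s = x ^ Δ * w ^ (s - Δ) := by
  rw [Real.div_rpow hx hw.le, Real.rpow_sub hw]
  field_simp

/-- Applied with `x = z z̄`, `u = 1 - z`, `v = 1 - z̄`, `v₀ = 1 - z₀`. -/
lemma div_rpow_mul_blockFun_le {coef : ℕ × ℕ → ℝ} (hc : ∀ nm, 0 ≤ coef nm)
    {x u v v₀ Δφ ε τi : ℝ} (hx : 0 ≤ x) (hu : 0 < u) (hv : 0 < v) (hvv₀ : v ≤ v₀)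
    (hτ : 2 * Δφ + ε ≤ τi)
    (hs : Summable fun nm : ℕ × ℕ => coef nm * u ^ nm.1 * v₀ ^ nm.2) :
    (x / (u * v)) ^ Δφ * blockFun τi coef u v ≤
      (v / v₀) ^ (ε / 2) * ((x / (u * v₀)) ^ Δφ * blockFun τi coef u v₀) := by
  have hv₀ : 0 < v₀ := hv.trans_le hvv₀
  have hprefactor : (x / (u * v)) ^ Δφ * (u * v) ^ (τi / 2) ≤
      (v / v₀) ^ (ε / 2) * ((x / (u * v₀)) ^ Δφ * (u * v₀) ^ (τi / 2)) := by
    rw [div_rpow_mul_rpow hx (by positivity), div_rpow_mul_rpow hx (by positivity),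
      Real.mul_rpow hu.le hv.le, Real.mul_rpow hu.le hv₀.le]
    have hv_pow := rpow_le_div_rpow_mul_rpow (a := τi / 2 - Δφ) (b := ε / 2) hv hvv₀
      (by linarith)
    calc x ^ Δφ * (u ^ (τi / 2 - Δφ) * v ^ (τi / 2 - Δφ))
        ≤ x ^ Δφ * (u ^ (τi / 2 - Δφ) * ((v / v₀) ^ (ε / 2) * v₀ ^ (τi / 2 - Δφ))) := by
          gcongr
      _ = _ := by ring
  simp only [blockFun_eq]
  calc (x / (u * v)) ^ Δφ * ((u * v) ^ (τi / 2) * blockSeries coef u v)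
      = (x / (u * v)) ^ Δφ * (u * v) ^ (τi / 2) * blockSeries coef u v := by ring
    _ ≤ (v / v₀) ^ (ε / 2) * ((x / (u * v₀)) ^ Δφ * (u * v₀) ^ (τi / 2)) *
          blockSeries coef u v₀ :=
        mul_le_mul hprefactor (blockSeries_mono hc hu.le le_rfl hv.le hvv₀ hs)
          (blockSeries_nonneg hc hu.le hv.le) (by positivity)
    _ = _ := by ring

lemma rpow_mul_tsum_highTwist_le {I : Type*} {p τ : I → ℝ} {coef : I → ℕ × ℕ → ℝ}
    (hp : ∀ i, 0 ≤ p i) (hcoef : ∀ i nm, 0 ≤ coef i nm) {x u v v₀ Δφ ε : ℝ}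
    (hx : 0 ≤ x) (hu : 0 < u) (hv : 0 < v) (hvv₀ : v ≤ v₀)
    (hinner : ∀ i, Summable fun nm : ℕ × ℕ => coef i nm * u ^ nm.1 * v₀ ^ nm.2)
    (hsum : Summable fun i => p i * blockFun (τ i) (coef i) u v)
    (hsum₀ : Summable fun i => p i * blockFun (τ i) (coef i) u v₀) :
    (x / (u * v)) ^ Δφ * ∑' i : {j : I // 2 * Δφ + ε ≤ τ j},
        p i.1 * blockFun (τ i.1) (coef i.1) u v ≤
      (v / v₀) ^ (ε / 2) * ((x / (u * v₀)) ^ Δφ * ∑' i, p i * blockFun (τ i) (coef i) u v₀) := by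
  have hv₀ : 0 < v₀ := hv.trans_le hvv₀
  have hterm (i : {j : I // 2 * Δφ + ε ≤ τ j}) :
      (x / (u * v)) ^ Δφ * (p i.1 * blockFun (τ i.1) (coef i.1) u v) ≤
        (v / v₀) ^ (ε / 2) * (x / (u * v₀)) ^ Δφ * (p i.1 * blockFun (τ i.1) (coef i.1) u v₀) := by
    have := mul_le_mul_of_nonneg_left
      (div_rpow_mul_blockFun_le (hcoef i) hx hu hv hvv₀ i.2 (hinner i)) (hp i)
    linarith
  have hsub : ∑' i : {j : I // 2 * Δφ + ε ≤ τ j}, p i.1 * blockFun (τ i.1) (coef i.1) u v₀ ≤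
      ∑' i, p i * blockFun (τ i) (coef i) u v₀ :=
    Summable.tsum_subtype_le _ {j | 2 * Δφ + ε ≤ τ j}
      (fun i => mul_nonneg (hp i) (blockFun_nonneg _ (hcoef i) hu.le hv₀.le)) hsum₀
  rw [← tsum_mul_left, ← mul_assoc, ← tsum_mul_left]
  calc _ ≤ _ := Summable.tsum_le_tsum hterm ((hsum.subtype _).mul_left _)
        ((hsum₀.subtype _).mul_left _)
    _ ≤ _ := by rw [tsum_mul_left, tsum_mul_left]; gcongr

lemma rpow_mul_tsum_crossed_le {I : Type*} {Δφ : ℝ} (hΔ : 0 ≤ Δφ)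
    {p τ : I → ℝ} {coef : I → ℕ × ℕ → ℝ}
    (hp : ∀ i, 0 ≤ p i) (hτ : ∀ i, 0 ≤ τ i) (hcoef : ∀ i nm, 0 ≤ coef i nm)
    (hinner : ∀ i, ∀ z zb : ℝ, 0 ≤ z → z < 1 → 0 ≤ zb → zb < 1 →
      Summable (fun nm : ℕ × ℕ => coef i nm * z ^ nm.1 * zb ^ nm.2))
    (hsum : ∀ z zb : ℝ, z ∈ Ioo (0:ℝ) 1 → zb ∈ Ioo (0:ℝ) 1 →
      Summable (fun i => p i * blockFun (τ i) (coef i) z zb))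
    (hcross : ∀ z zb : ℝ, z ∈ Ioo (0:ℝ) 1 → zb ∈ Ioo (0:ℝ) 1 →
      1 + ∑' i, p i * blockFun (τ i) (coef i) z zb =
        (z * zb / ((1 - z) * (1 - zb))) ^ Δφ *
          (1 + ∑' i, p i * blockFun (τ i) (coef i) (1 - z) (1 - zb)))
    {z z₀ zb : ℝ} (hz : 0 < z) (hzz₀ : z ≤ z₀) (hz₀ : z₀ < 1) (hzb : 0 ≤ zb) (hzb1 : zb ≤ 1) :
    (z * zb / ((1 - z) * (1 - z₀))) ^ Δφ *
        ∑' i, p i * blockFun (τ i) (coef i) (1 - z) (1 - z₀) ≤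
      z₀⁻¹ ^ Δφ * (1 + ∑' i, p i * blockFun (τ i) (coef i) z₀ z₀) := by
  have hz₀0 : 0 < z₀ := hz.trans_le hzz₀
  have hz1 : z < 1 := hzz₀.trans_lt hz₀
  have hu : 0 < 1 - z := by linarith
  have hv₀ : 0 < 1 - z₀ := by linarith
  have hcrossed : (z * z₀ / ((1 - z) * (1 - z₀))) ^ Δφ *
      ∑' i, p i * blockFun (τ i) (coef i) (1 - z) (1 - z₀) ≤
        1 + ∑' i, p i * blockFun (τ i) (coef i) z z₀ := by
    rw [hcross z z₀ ⟨hz, hz1⟩ ⟨hz₀0, hz₀⟩, mul_one_add]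
    have : 0 ≤ (z * z₀ / ((1 - z) * (1 - z₀))) ^ Δφ := by positivity
    linarith
  have hdirect : ∑' i, p i * blockFun (τ i) (coef i) z z₀ ≤
      ∑' i, p i * blockFun (τ i) (coef i) z₀ z₀ :=
    Summable.tsum_le_tsum
      (fun i => mul_le_mul_of_nonneg_left (blockFun_mono (hτ i) (hcoef i) hz.le hzz₀
        hz₀0.le le_rfl (hinner i z₀ z₀ hz₀0.le hz₀ hz₀0.le hz₀)) (hp i))
      (hsum z z₀ ⟨hz, hz1⟩ ⟨hz₀0, hz₀⟩) (hsum z₀ z₀ ⟨hz₀0, hz₀⟩ ⟨hz₀0, hz₀⟩)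
  have hsplit : (z * zb / ((1 - z) * (1 - z₀))) ^ Δφ =
      (zb / z₀) ^ Δφ * (z * z₀ / ((1 - z) * (1 - z₀))) ^ Δφ := by
    rw [← Real.mul_rpow (by positivity) (by positivity)]
    congr 1
    field_simp
  have hfactor : (zb / z₀) ^ Δφ ≤ z₀⁻¹ ^ Δφ := by
    rw [← one_div]
    gcongr
  have hS : 0 ≤ ∑' i, p i * blockFun (τ i) (coef i) (1 - z) (1 - z₀) :=
    tsum_nonneg fun i => mul_nonneg (hp i) (blockFun_nonneg _ (hcoef i) hu.le hv₀.le)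
  rw [hsplit, mul_assoc]
  exact mul_le_mul hfactor (hcrossed.trans (by linarith)) (by positivity) (by positivity)

theorem stmt6_general {I : Type*} (Δφ : ℝ) (hΔ : 0 < Δφ)
    (p τ : I → ℝ) (coef : I → ℕ × ℕ → ℝ)
    (hp : ∀ i, 0 ≤ p i) (hτ : ∀ i, 0 ≤ τ i) (hcoef : ∀ i nm, 0 ≤ coef i nm)
    (hinner : ∀ i, ∀ z zb : ℝ, 0 ≤ z → z < 1 → 0 ≤ zb → zb < 1 →
      Summable (fun nm : ℕ × ℕ => coef i nm * z ^ nm.1 * zb ^ nm.2))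
    (hsum : ∀ z zb : ℝ, z ∈ Ioo (0:ℝ) 1 → zb ∈ Ioo (0:ℝ) 1 →
      Summable (fun i => p i * blockFun (τ i) (coef i) z zb))
    (hcross : ∀ z zb : ℝ, z ∈ Ioo (0:ℝ) 1 → zb ∈ Ioo (0:ℝ) 1 →
      1 + ∑' i, p i * blockFun (τ i) (coef i) z zb =
        (z * zb / ((1 - z) * (1 - zb))) ^ Δφ *
          (1 + ∑' i, p i * blockFun (τ i) (coef i) (1 - z) (1 - zb)))
    (ε : ℝ) (z₀ : ℝ) (hz₀ : z₀ ∈ Ioo (0:ℝ) 1) :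
    ∃ C' : ℝ, ∀ z zb : ℝ, 0 < z → z ≤ z₀ → z₀ ≤ zb → zb < 1 →
      (z * zb / ((1 - z) * (1 - zb))) ^ Δφ *
        (∑' i : {j : I // 2 * Δφ + ε ≤ τ j},
          p i.1 * blockFun (τ i.1) (coef i.1) (1 - z) (1 - zb)) ≤
        C' * (1 - zb) ^ (ε / 2) := by
  obtain ⟨hz₀0, hz₀1⟩ := hz₀
  set M := 1 + ∑' i, p i * blockFun (τ i) (coef i) z₀ z₀
  refine ⟨z₀⁻¹ ^ Δφ * M / (1 - z₀) ^ (ε / 2), fun z zb hz hzz₀ hz₀zb hzb1 => ?_⟩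
  have hzb : 0 < zb := hz₀0.trans_le hz₀zb
  have hv : 0 < 1 - zb := by linarith
  have hv₀ : 0 < 1 - z₀ := by linarith
  calc _ ≤ ((1 - zb) / (1 - z₀)) ^ (ε / 2) * ((z * zb / ((1 - z) * (1 - z₀))) ^ Δφ *
          ∑' i, p i * blockFun (τ i) (coef i) (1 - z) (1 - z₀)) :=
        rpow_mul_tsum_highTwist_le hp hcoef (by positivity) (by linarith) hv (by linarith)
          (fun i => hinner i _ _ (by linarith) (by linarith) hv₀.le (by linarith))
          (hsum _ _ ⟨by linarith, by linarith⟩ ⟨hv, by linarith⟩)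
          (hsum _ _ ⟨by linarith, by linarith⟩ ⟨hv₀, by linarith⟩)
    _ ≤ ((1 - zb) / (1 - z₀)) ^ (ε / 2) * (z₀⁻¹ ^ Δφ * M) := by
        gcongr ?_ * ?_
        exact rpow_mul_tsum_crossed_le hΔ.le hp hτ hcoef hinner hsum hcross hz hzz₀ hz₀1
          hzb.le hzb1.le
    _ = z₀⁻¹ ^ Δφ * M / (1 - z₀) ^ (ε / 2) * (1 - zb) ^ (ε / 2) := by
        rw [Real.div_rpow hv.le hv₀.le]
        ring

/-- crossed-channel high-twist estimate, Section 2.2.3: for every `ε > 0`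
and `z₀ ∈ (0,1)` there is `C'` with
`(z z̄/((1-z)(1-z̄)))^Δφ ∑_{τᵢ ≥ 2Δφ+ε} pᵢ gᵢ(1-z, 1-z̄) ≤ C' (1-z̄)^(ε/2)`
for `0 < z ≤ z₀ ≤ z̄ < 1`. -/
theorem stmt6 {I : Type*} [Countable I] (Δφ : ℝ) (hΔ : 0 < Δφ)
    (p τ : I → ℝ) (coef : I → ℕ × ℕ → ℝ)
    (hp : ∀ i, 0 ≤ p i) (hτ : ∀ i, 0 ≤ τ i) (hcoef : ∀ i nm, 0 ≤ coef i nm)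
    (hinner : ∀ i, ∀ z zb : ℝ, 0 ≤ z → z < 1 → 0 ≤ zb → zb < 1 →
      Summable (fun nm : ℕ × ℕ => coef i nm * z ^ nm.1 * zb ^ nm.2))
    (hsum : ∀ z zb : ℝ, z ∈ Ioo (0:ℝ) 1 → zb ∈ Ioo (0:ℝ) 1 →
      Summable (fun i => p i * blockFun (τ i) (coef i) z zb))
    (hcross : ∀ z zb : ℝ, z ∈ Ioo (0:ℝ) 1 → zb ∈ Ioo (0:ℝ) 1 →
      1 + ∑' i, p i * blockFun (τ i) (coef i) z zb =
        (z * zb / ((1 - z) * (1 - zb))) ^ Δφ *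
          (1 + ∑' i, p i * blockFun (τ i) (coef i) (1 - z) (1 - zb)))
    (ε : ℝ) (hε : 0 < ε) (z₀ : ℝ) (hz₀ : z₀ ∈ Ioo (0:ℝ) 1) :
    ∃ C' : ℝ, ∀ z zb : ℝ, 0 < z → z ≤ z₀ → z₀ ≤ zb → zb < 1 →
      (z * zb / ((1 - z) * (1 - zb))) ^ Δφ *
        (∑' i : {j : I // 2 * Δφ + ε ≤ τ j},
          p i.1 * blockFun (τ i.1) (coef i.1) (1 - z) (1 - zb)) ≤
        C' * (1 - zb) ^ (ε / 2) :=
  stmt6_general Δφ hΔ p τ coef hp hτ hcoef hinner hsum hcross ε z₀ hz₀
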